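/- Let A be a ℤ-graded ring, M a ℤ-graded A-bimodule, and q ∈ A an invertible central element of degree 0 with associated ring automorphism f_q. Then the identity maps M ⊗_ℤ A^{⊗_ℤ n} → M ⊗_ℤ A^{⊗_ℤ n} define an isomorphism of chain complexes from the quantum Hochschild complex qCH_•(A; M) (with parameter q) to the ordinary Hochschild complex CH_•(A; {}_{f_q}M) of A with coefficients in the left-twisted bimodule {}_{f_q}M. Consequently, qHH_n(A; M) ≅ HH_n(A; {}_{f_q}M) for all n ≥ 0. -/

import Mathlib

/-!
On a homogeneous last factor `a_n` the quantum twist `q^{-|a_n|} a_n` is exactly `f_q a_n`.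
Both differentials are additive in `a_n`, so they agree on all of `M ⊗ A^{⊗ (n+1)}`, and equal
differentials have equal homology.
-/

open MulOpposite TensorProduct

/-- The `i`-th "multiply adjacent factors" face map on tuples: given
`a = (a_1, …, a_{n+1})` (zero-indexed as `a : Fin (n+1) → A`), `qHHFace i a` is the
tuple `(a_1, …, a_i * a_{i+1}, …, a_{n+1})` of length `n`, where the factors in
positions `i` and `i+1` (zero-indexed) have been multiplied. -/
def qHHFace {A : Type*} [Ring A] {n : ℕ} (i : Fin n) (a : Fin (n + 1) → A) :
    Fin n → A := fun j =>
  if j.val < i.val then a j.castSucc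
  else if j.val = i.val then a i.castSucc * a i.succ
  else a j.succ

/-- The homology in degree `n + 1` of a chain complex of abelian groups with chain
groups `C n` and differentials `δ n : C (n+1) → C n`: the kernel of `δ n` modulo the
image of `δ (n+1)`. -/
abbrev chainHomologySucc {C : ℕ → Type*} [∀ n, AddCommGroup (C n)]
    (δ : ∀ n : ℕ, C (n + 1) →+ C n) (n : ℕ) : Type _ :=
  (δ n).ker ⧸ ((δ (n + 1)).range.addSubgroupOf (δ n).ker)

/-- The homology in degree `0` of a chain complex of abelian groups with chain groups
`C n` and differentials `δ n : C (n+1) → C n`: the cokernel of `δ 0`. -/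
abbrev chainHomologyZero {C : ℕ → Type*} [∀ n, AddCommGroup (C n)]
    (δ : ∀ n : ℕ, C (n + 1) →+ C n) : Type _ :=
  C 0 ⧸ (δ 0).range

theorem DirectSum.Decomposition.addMonoidHom_ext {ι σ M N : Type*} [DecidableEq ι]
    [AddCommMonoid M] [SetLike σ M] [AddSubmonoidClass σ M] (ℳ : ι → σ)
    [DirectSum.Decomposition ℳ] [AddZeroClass N] {φ ψ : M →+ N}
    (h : ∀ i, ∀ x ∈ ℳ i, φ x = ψ x) : φ = ψ :=
  AddMonoidHom.ext fun x =>
    DirectSum.Decomposition.inductionOn ℳ (by rw [map_zero, map_zero]) (fun x => h _ _ x.2)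
      (fun x y hx hy => by rw [map_add, map_add, hx, hy]) x

theorem TensorProduct.addMonoidHom_ext_tmul_tprod {ι M N : Type*} {s : ι → Type*}
    [AddCommGroup M] [∀ i, AddCommGroup (s i)] [AddCommGroup N]
    {φ ψ : M ⊗[ℤ] (⨂[ℤ] i, s i) →+ N}
    (h : ∀ m a, φ (m ⊗ₜ PiTensorProduct.tprod ℤ a) = ψ (m ⊗ₜ PiTensorProduct.tprod ℤ a)) :
    φ = ψ :=
  AddMonoidHom.toIntLinearMap_injective <| TensorProduct.ext <| LinearMap.ext fun m =>
    PiTensorProduct.ext <| MultilinearMap.ext fun a => h m a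

theorem TensorProduct.addMonoidHom_ext_tmul_tprod_of_homogeneous {ι κ σ M A N : Type*}
    [DecidableEq ι] [DecidableEq κ] [AddCommGroup M] [AddCommGroup A] [AddCommGroup N]
    [SetLike σ A] [AddSubmonoidClass σ A] (𝒜 : κ → σ) [DirectSum.Decomposition 𝒜] (i : ι)
    {φ ψ : M ⊗[ℤ] (⨂[ℤ] _ : ι, A) →+ N}
    (h : ∀ m a k, a i ∈ 𝒜 k →
      φ (m ⊗ₜ PiTensorProduct.tprod ℤ a) = ψ (m ⊗ₜ PiTensorProduct.tprod ℤ a)) :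
    φ = ψ := by
  refine TensorProduct.addMonoidHom_ext_tmul_tprod fun m a => ?_
  let varyAt : A →+ M ⊗[ℤ] (⨂[ℤ] _ : ι, A) :=
    ((TensorProduct.mk ℤ M _ m).comp ((PiTensorProduct.tprod ℤ).toLinearMap a i)).toAddMonoidHom
  have hvary : φ.comp varyAt = ψ.comp varyAt :=
    DirectSum.Decomposition.addMonoidHom_ext 𝒜 fun k x hx =>
      h m _ k (by rwa [Function.update_self])
  simpa [varyAt] using DFunLike.congr_fun hvary (a i)

theorem qHH_eq_hochschild_of_twisted_general {A : Type*} [Ring A]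
    (𝒜 : ℤ → AddSubgroup A) [GradedRing 𝒜]
    {M : Type*} [AddCommGroup M] [Module A M] [Module Aᵐᵒᵖ M]
    (q : Aˣ)
    (f : A →+* A)
    (hf : ∀ (n : ℤ) (a : A), a ∈ 𝒜 n → f a = ((q ^ (-n) : Aˣ) : A) * a)
    -- the quantum Hochschild differential:
    (δq : ∀ n : ℕ, (M ⊗[ℤ] TensorPower ℤ (n + 1) A) →+ (M ⊗[ℤ] TensorPower ℤ n A))
    (hδq : ∀ (n : ℕ) (m : M) (a : Fin (n + 1) → A) (k : ℤ), a (Fin.last n) ∈ 𝒜 k →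
      δq n (m ⊗ₜ[ℤ] PiTensorProduct.tprod ℤ a) =
        (op (a 0) • m) ⊗ₜ[ℤ] PiTensorProduct.tprod ℤ (fun j : Fin n => a j.succ)
        + ∑ i : Fin n, ((-1 : ℤ) ^ (i.val + 1)) •
            (m ⊗ₜ[ℤ] PiTensorProduct.tprod ℤ (qHHFace i a))
        + ((-1 : ℤ) ^ (n + 1)) •
            (((((q ^ (-k) : Aˣ) : A) * a (Fin.last n)) • m) ⊗ₜ[ℤ]
              PiTensorProduct.tprod ℤ (fun j : Fin n => a j.castSucc)))
    -- the ordinary Hochschild differential of the left-twisted bimodule `{}_{f_q}M`: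
    (δh : ∀ n : ℕ, (M ⊗[ℤ] TensorPower ℤ (n + 1) A) →+ (M ⊗[ℤ] TensorPower ℤ n A))
    (hδh : ∀ (n : ℕ) (m : M) (a : Fin (n + 1) → A),
      δh n (m ⊗ₜ[ℤ] PiTensorProduct.tprod ℤ a) =
        (op (a 0) • m) ⊗ₜ[ℤ] PiTensorProduct.tprod ℤ (fun j : Fin n => a j.succ)
        + ∑ i : Fin n, ((-1 : ℤ) ^ (i.val + 1)) •
            (m ⊗ₜ[ℤ] PiTensorProduct.tprod ℤ (qHHFace i a))
        + ((-1 : ℤ) ^ (n + 1)) •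
            ((f (a (Fin.last n)) • m) ⊗ₜ[ℤ]
              PiTensorProduct.tprod ℤ (fun j : Fin n => a j.castSucc))) :
    (∀ n : ℕ, δq n = δh n) ∧
    Nonempty (chainHomologyZero (C := fun n => M ⊗[ℤ] TensorPower ℤ n A) δq ≃+
      chainHomologyZero (C := fun n => M ⊗[ℤ] TensorPower ℤ n A) δh) ∧
    (∀ n : ℕ, Nonempty (chainHomologySucc (C := fun n => M ⊗[ℤ] TensorPower ℤ n A) δq n ≃+
      chainHomologySucc (C := fun n => M ⊗[ℤ] TensorPower ℤ n A) δh n)) := by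
  have hδ : δq = δh := funext fun n =>
    TensorProduct.addMonoidHom_ext_tmul_tprod_of_homogeneous 𝒜 (Fin.last n) fun m a k hk => by
      rw [hδq n m a k hk, hδh n m a, hf k _ hk]
  subst hδ
  exact ⟨fun _ => rfl, ⟨AddEquiv.refl _⟩, fun _ => ⟨AddEquiv.refl _⟩⟩

/-- Let `A` be a ℤ-graded ring, `M` a ℤ-graded `A`-bimodule, and `q` an invertible
central element of degree `0` with associated ring automorphism `f_q` (determined by
`f_q a = q^(-n) * a` for `a ∈ 𝒜 n`).  Let `δq` be the differential of the quantum
Hochschild complex `qCH_•(A; M)` (with parameter `q`) and `δh` the differential of the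
ordinary Hochschild complex `CH_•(A; {}_{f_q}M)` of `A` with coefficients in the
left-twisted bimodule `{}_{f_q}M` (same right action, left action `a ⋄ m := f_q a • m`),
both with chain groups `M ⊗_ℤ A^{⊗_ℤ n}`.  Then the identity maps
`M ⊗_ℤ A^{⊗_ℤ n} → M ⊗_ℤ A^{⊗_ℤ n}` define an isomorphism of chain complexes from
`qCH_•(A; M)` to `CH_•(A; {}_{f_q}M)`, i.e. `δq = δh`; consequently
`qHH_n(A; M) ≅ HH_n(A; {}_{f_q}M)` for all `n ≥ 0`. -/
theorem qHH_eq_hochschild_of_twisted {A : Type*} [Ring A]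
    (𝒜 : ℤ → AddSubgroup A) [GradedRing 𝒜]
    {M : Type*} [AddCommGroup M] [Module A M] [Module Aᵐᵒᵖ M]
    [SMulCommClass A Aᵐᵒᵖ M]
    (ℳ : ℤ → AddSubgroup M) [DirectSum.Decomposition ℳ]
    (hleft : ∀ (e d : ℤ), ∀ a ∈ 𝒜 e, ∀ m ∈ ℳ d, a • m ∈ ℳ (e + d))
    (hright : ∀ (d e : ℤ), ∀ m ∈ ℳ d, ∀ a ∈ 𝒜 e, op a • m ∈ ℳ (d + e))
    (q : Aˣ)
    (hcentral : ∀ a : A, (q : A) * a = a * (q : A))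
    (hdeg : (q : A) ∈ 𝒜 0)
    (f : A →+* A)
    (hf : ∀ (n : ℤ) (a : A), a ∈ 𝒜 n → f a = ((q ^ (-n) : Aˣ) : A) * a)
    -- the quantum Hochschild differential:
    (δq : ∀ n : ℕ, (M ⊗[ℤ] TensorPower ℤ (n + 1) A) →+ (M ⊗[ℤ] TensorPower ℤ n A))
    (hδq : ∀ (n : ℕ) (m : M) (a : Fin (n + 1) → A) (k : ℤ), a (Fin.last n) ∈ 𝒜 k →
      δq n (m ⊗ₜ[ℤ] PiTensorProduct.tprod ℤ a) =
        (op (a 0) • m) ⊗ₜ[ℤ] PiTensorProduct.tprod ℤ (fun j : Fin n => a j.succ)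
        + ∑ i : Fin n, ((-1 : ℤ) ^ (i.val + 1)) •
            (m ⊗ₜ[ℤ] PiTensorProduct.tprod ℤ (qHHFace i a))
        + ((-1 : ℤ) ^ (n + 1)) •
            (((((q ^ (-k) : Aˣ) : A) * a (Fin.last n)) • m) ⊗ₜ[ℤ]
              PiTensorProduct.tprod ℤ (fun j : Fin n => a j.castSucc)))
    (hδq2 : ∀ n : ℕ, (δq n).comp (δq (n + 1)) = 0)
    -- the ordinary Hochschild differential of the left-twisted bimodule `{}_{f_q}M`:
    (δh : ∀ n : ℕ, (M ⊗[ℤ] TensorPower ℤ (n + 1) A) →+ (M ⊗[ℤ] TensorPower ℤ n A))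
    (hδh : ∀ (n : ℕ) (m : M) (a : Fin (n + 1) → A),
      δh n (m ⊗ₜ[ℤ] PiTensorProduct.tprod ℤ a) =
        (op (a 0) • m) ⊗ₜ[ℤ] PiTensorProduct.tprod ℤ (fun j : Fin n => a j.succ)
        + ∑ i : Fin n, ((-1 : ℤ) ^ (i.val + 1)) •
            (m ⊗ₜ[ℤ] PiTensorProduct.tprod ℤ (qHHFace i a))
        + ((-1 : ℤ) ^ (n + 1)) •
            ((f (a (Fin.last n)) • m) ⊗ₜ[ℤ]
              PiTensorProduct.tprod ℤ (fun j : Fin n => a j.castSucc)))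
    (hδh2 : ∀ n : ℕ, (δh n).comp (δh (n + 1)) = 0) :
    (∀ n : ℕ, δq n = δh n) ∧
    Nonempty (chainHomologyZero (C := fun n => M ⊗[ℤ] TensorPower ℤ n A) δq ≃+
      chainHomologyZero (C := fun n => M ⊗[ℤ] TensorPower ℤ n A) δh) ∧
    (∀ n : ℕ, Nonempty (chainHomologySucc (C := fun n => M ⊗[ℤ] TensorPower ℤ n A) δq n ≃+
      chainHomologySucc (C := fun n => M ⊗[ℤ] TensorPower ℤ n A) δh n)) :=
  qHH_eq_hochschild_of_twisted_general 𝒜 q f hf δq hδq δh hδh
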